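/- Under the same hypotheses (area dπ, ∫ K dA = 2π d(3-d), K ≤ 4 pointwise and (f∘K) integrable for f(K)=((K-4)²+4)/(6-K)), one has 2d² - 4d + 4 ≤ (1/π) ∫_Σ ((K-4)² + 4)/(6-K) dA. -/

import Mathlib

/-!
With `u = 6 - t`, the weight `((t - 4)² + 4) / (6 - t)` equals `u - 4 + 8 / u`, a convex function
of `t` on `t < 6`. The Gauss–Bonnet constraint puts the mean of `K` over a measure of mass `dπ` at
`6 - 2d`, so Jensen's inequality gives `(2d² - 4d + 4) / d ≤ (1 / (dπ)) ∫ ((K - 4)² + 4) / (6 - K)`.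
-/

open MeasureTheory Real Set

noncomputable def curvatureWeight (t : ℝ) : ℝ := ((t - 4) ^ 2 + 4) / (6 - t)

lemma curvatureWeight_eq {t : ℝ} (ht : t ≠ 6) :
    curvatureWeight t = (6 - t) - 4 + 8 * (6 - t)⁻¹ := by
  have : 6 - t ≠ 0 := sub_ne_zero.2 (Ne.symm ht)
  rw [curvatureWeight]
  field_simp
  ring

lemma convexOn_curvatureWeight : ConvexOn ℝ (Iio 6) curvatureWeight := by
  have h_inv : ConvexOn ℝ (Ioi 0) fun u : ℝ => 8 * u⁻¹ :=
    ((convexOn_zpow (-1)).smul (c := 8) (by norm_num)).congr fun u _ => by simp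
  have h_convex : ConvexOn ℝ (Ioi 0) fun u : ℝ => u - 4 + 8 * u⁻¹ :=
    (((convexOn_id (convex_Ioi 0)).add h_inv).add_const (-4)).congr fun u _ => by
      simp only [Pi.add_apply, id]; ring
  have h := h_convex.comp_affineMap (AffineMap.const ℝ ℝ (6 : ℝ) - AffineMap.id ℝ ℝ)
  have h_preimage : ⇑(AffineMap.const ℝ ℝ (6 : ℝ) - AffineMap.id ℝ ℝ) ⁻¹' Ioi 0 = Iio 6 := by
    ext t; simp
  rw [h_preimage] at h
  exact h.congr fun t ht => by simp [curvatureWeight_eq (ne_of_lt ht)]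

lemma continuousOn_curvatureWeight : ContinuousOn curvatureWeight (Iio 6) :=
  ContinuousOn.div (by fun_prop) (by fun_prop) fun _ ht => sub_ne_zero.2 (ne_of_gt ht)

lemma curvatureWeight_six_sub_two_mul {d : ℝ} (hd : d ≠ 0) :
    curvatureWeight (6 - 2 * d) = (2 * d ^ 2 - 4 * d + 4) / d := by
  rw [curvatureWeight]
  field_simp
  ring

theorem stmt_12_general {X : Type*} [MeasurableSpace X] (μ : Measure X) (d : ℕ) (hd : 1 ≤ d)
    (hμ : μ Set.univ = ENNReal.ofReal ((d:ℝ) * π))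
    (K : X → ℝ) (hle : ∀ x, K x ≤ 4)
    (hint : Integrable K μ)
    (hGB : ∫ x, K x ∂μ = 2 * π * (d:ℝ) * (3 - (d:ℝ)))
    (hfint : Integrable (fun x => ((K x - 4)^2 + 4) / (6 - K x)) μ) :
    2 * (d:ℝ)^2 - 4 * d + 4
      ≤ (1/π) * ∫ x, ((K x - 4)^2 + 4) / (6 - K x) ∂μ := by
  have hd_pos : (0 : ℝ) < d := by exact_mod_cast hd
  have h_mass_pos : 0 < (d : ℝ) * π := mul_pos hd_pos pi_pos
  have h_mass : μ.real univ = d * π := by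
    rw [measureReal_def, hμ, ENNReal.toReal_ofReal h_mass_pos.le]
  have : IsFiniteMeasure μ := ⟨by rw [hμ]; exact ENNReal.ofReal_lt_top⟩
  have : NeZero μ := ⟨fun h => by simp [h] at h_mass; linarith⟩
  have h_Iic : Iic (4 : ℝ) ⊆ Iio 6 := Iic_subset_Iio.2 (by norm_num)
  have h_jensen := (convexOn_curvatureWeight.subset h_Iic (convex_Iic 4)).map_average_le
    (continuousOn_curvatureWeight.mono h_Iic) isClosed_Iic (ae_of_all _ hle) hint hfint
  have h_mean : ⨍ x, K x ∂μ = 6 - 2 * d := by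
    rw [average_eq, h_mass, hGB, smul_eq_mul]
    field_simp
    ring
  rw [h_mean, curvatureWeight_six_sub_two_mul hd_pos.ne', average_eq, h_mass, smul_eq_mul,
    div_le_iff₀ hd_pos] at h_jensen
  calc 2 * (d : ℝ) ^ 2 - 4 * d + 4 ≤ (d * π)⁻¹ * (∫ x, curvatureWeight (K x) ∂μ) * d := h_jensen
    _ = (1 / π) * ∫ x, ((K x - 4) ^ 2 + 4) / (6 - K x) ∂μ := by
      simp only [curvatureWeight]; field_simp

theorem stmt_12 {X : Type*} [MeasurableSpace X] (μ : Measure X) (d : ℕ) (hd : 1 ≤ d)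
    (hμ : μ Set.univ = ENNReal.ofReal ((d:ℝ) * π))
    (K : X → ℝ) (hmeas : Measurable K) (hle : ∀ x, K x ≤ 4)
    (hint : Integrable K μ)
    (hGB : ∫ x, K x ∂μ = 2 * π * (d:ℝ) * (3 - (d:ℝ)))
    (hfint : Integrable (fun x => ((K x - 4)^2 + 4) / (6 - K x)) μ) :
    2 * (d:ℝ)^2 - 4 * d + 4
      ≤ (1/π) * ∫ x, ((K x - 4)^2 + 4) / (6 - K x) ∂μ :=
  stmt_12_general μ d hd hμ K hle hint hGB hfint
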